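/- (Stackelberg gradient equals the policy gradient.) Assume μ0(s) > 0 for all s and π_θ(s,a) > 0 for all (s,a), and fix q ∈ ℝ^{S×A}. Define the actor objective J_π(θ,q) := (1−γ) μ0ᵀ Π_θ q and the on-policy critic objective J_q(θ,q) := ½ (r − Ψ_θ q)ᵀ Δ(d_θ) (r − Ψ_θ q). Let v := ∂_q J_π = (1−γ) Π_θᵀ μ0, let Hes := ∂_q² J_q = Ψ_θᵀ Δ(d_θ) Ψ_θ (which is invertible), and let M ∈ ℝ^{n × (S×A)} be the Jacobian in θ of the map θ ↦ ∂_q J_q(θ,q) = Ψ_θᵀ Δ(d_θ)(Ψ_θ q − r) with q held fixed. Then the Stackelberg gradient g := ∂_θ J_π(θ,q) − M · Hes⁻¹ · v satisfies g = ∂_θ J_π(θ,q) + ∇_θ (d_θᵀ (r − Ψ_θ q)) = ∇_θ J(θ), the true policy gradient of J(θ) := d_θᵀ r. -/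

import Mathlib

open Matrix

noncomputable section

variable {S A : Type*} [Fintype S] [Fintype A] [DecidableEq S] [DecidableEq A]
  [Nonempty S] [Nonempty A]

/-- A policy: nonnegative entries, and for each state the action probabilities sum to one. -/
def IsPolicy (x : S × A → ℝ) : Prop :=
  (∀ p, 0 ≤ x p) ∧ ∀ s : S, ∑ a : A, x (s, a) = 1

/-- A row-stochastic transition matrix. -/
def IsStochasticMat (P : Matrix (S × A) S ℝ) : Prop :=
  (∀ p s, 0 ≤ P p s) ∧ ∀ p, ∑ s : S, P p s = 1

/-- A probability vector on states. -/
def IsProbVec (μ : S → ℝ) : Prop :=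
  (∀ s, 0 ≤ μ s) ∧ ∑ s : S, μ s = 1

/-- The block policy matrix `Π(x) ∈ ℝ^{S × (S×A)}`. -/
def piMat (x : S × A → ℝ) : Matrix S (S × A) ℝ :=
  Matrix.of fun s p => if p.1 = s then x p else 0

/-- The action-marginalization matrix `Ξ ∈ ℝ^{S × (S×A)}`. -/
def xiMat : Matrix S (S × A) ℝ :=
  Matrix.of fun s p => if p.1 = s then (1 : ℝ) else 0

/-- `Ψ(x) = I - γ P Π(x)`. -/
def psiMat (P : Matrix (S × A) S ℝ) (γ : ℝ) (x : S × A → ℝ) :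
    Matrix (S × A) (S × A) ℝ :=
  1 - γ • (P * piMat x)

/-- The discounted state-action occupancy `d(x) = (1-γ)(Ψ(x)ᵀ)⁻¹ Π(x)ᵀ μ0`. -/
def dOcc (P : Matrix (S × A) S ℝ) (γ : ℝ) (μ0 : S → ℝ) (x : S × A → ℝ) :
    S × A → ℝ :=
  (1 - γ) • (((psiMat P γ x)ᵀ)⁻¹ *ᵥ ((piMat x)ᵀ *ᵥ μ0))

end

/-!
Since `P Π_θ` is row-stochastic, `Ψ_θ 1 = (1 - γ) 1`, and `Ψ_θᵀ d_θ = v` by the definition of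
`d_θ`. Hence `Hes ((1 - γ)⁻¹ 1) = Ψ_θᵀ Δ(d_θ) 1 = Ψ_θᵀ d_θ = v`, i.e. `Hes⁻¹ v = (1 - γ)⁻¹ 1`, so
`M Hes⁻¹ v` is `(1 - γ)⁻¹` times the gradient of `1ᵀ Ψ_θᵀ Δ(d_θ)(Ψ_θ q - r)
= (1 - γ) d_θᵀ (Ψ_θ q - r)`. This gives the first identity; the second follows because
`d_θᵀ Ψ_θ q = vᵀ q = J_π(θ, q)` for every `θ`, so `J_π + d_θᵀ (r - Ψ_θ q) = d_θᵀ r` identically.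
`Hes` is invertible because `Ψ_θ⁻¹ = ∑ (γ P Π_θ)ᵏ` is entrywise nonnegative with diagonal `≥ 1`,
which makes `d_θ ≥ (1 - γ) Π_θᵀ μ0 > 0`.
-/

open Matrix

section Neumann

variable {ι : Type*} [Fintype ι] [DecidableEq ι] {M : Matrix ι ι ℝ} {γ : ℝ}

attribute [local instance] Matrix.linftyOpNormedAddCommGroup Matrix.linftyOpNormedRing
  Matrix.linftyOpNormedAlgebra

lemma Matrix.linfty_opNorm_le_one_of_mem_rowStochastic (hM : M ∈ rowStochastic ℝ ι) :
    ‖M‖ ≤ 1 := by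
  rw [linfty_opNorm_def, NNReal.coe_le_one, Finset.sup_le_iff]
  intro i _
  rw [← NNReal.coe_le_one, NNReal.coe_sum]
  simp_rw [coe_nnnorm, Real.norm_of_nonneg (nonneg_of_mem_rowStochastic hM),
    sum_row_of_mem_rowStochastic hM, le_refl]

lemma Matrix.norm_smul_lt_one_of_mem_rowStochastic (hM : M ∈ rowStochastic ℝ ι)
    (hγ : |γ| < 1) : ‖γ • M‖ < 1 :=
  calc ‖γ • M‖ = |γ| * ‖M‖ := by rw [norm_smul, Real.norm_eq_abs]
    _ ≤ |γ| * 1 := by gcongr; exact linfty_opNorm_le_one_of_mem_rowStochastic hM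
    _ < 1 := by rwa [mul_one]

lemma Matrix.isUnit_one_sub_smul_of_mem_rowStochastic (hM : M ∈ rowStochastic ℝ ι)
    (hγ : |γ| < 1) : IsUnit (1 - γ • M) :=
  isUnit_one_sub_of_norm_lt_one (norm_smul_lt_one_of_mem_rowStochastic hM hγ)

lemma Matrix.hasSum_inv_one_sub_smul_apply (hM : M ∈ rowStochastic ℝ ι) (hγ : |γ| < 1)
    (i j : ι) : HasSum (fun k => ((γ • M) ^ k) i j) ((1 - γ • M)⁻¹ i j) := by
  have h := hasSum_geom_series_inverse _ (norm_smul_lt_one_of_mem_rowStochastic hM hγ)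
  rw [← nonsing_inv_eq_ringInverse] at h
  exact Pi.hasSum.mp (Pi.hasSum.mp h i) j

lemma Matrix.smul_pow_apply_nonneg (hM : M ∈ rowStochastic ℝ ι) (hγ0 : 0 ≤ γ) (k : ℕ)
    (i j : ι) : 0 ≤ ((γ • M) ^ k) i j := by
  rw [smul_pow, smul_apply, smul_eq_mul]
  exact mul_nonneg (pow_nonneg hγ0 k) (nonneg_of_mem_rowStochastic (pow_mem hM k))

lemma Matrix.inv_one_sub_smul_apply_nonneg (hM : M ∈ rowStochastic ℝ ι) (hγ0 : 0 ≤ γ)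
    (hγ1 : γ < 1) (i j : ι) : 0 ≤ (1 - γ • M)⁻¹ i j :=
  (hasSum_inv_one_sub_smul_apply hM (abs_lt.mpr ⟨by linarith, hγ1⟩) i j).nonneg
    fun k => smul_pow_apply_nonneg hM hγ0 k i j

lemma Matrix.one_le_inv_one_sub_smul_apply_self (hM : M ∈ rowStochastic ℝ ι) (hγ0 : 0 ≤ γ)
    (hγ1 : γ < 1) (i : ι) : 1 ≤ (1 - γ • M)⁻¹ i i := by
  have h := hasSum_inv_one_sub_smul_apply hM (abs_lt.mpr ⟨by linarith, hγ1⟩) i i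
  calc (1 : ℝ) = ((γ • M) ^ 0) i i := by simp
    _ ≤ (1 - γ • M)⁻¹ i i :=
      h.summable.le_tsum 0 (fun k _ => smul_pow_apply_nonneg hM hγ0 k i i) |>.trans_eq h.tsum_eq

end Neumann

section Differentiability

variable {E : Type*} [NormedAddCommGroup E] [NormedSpace ℝ E] {x : E} {ι κ : Type*}

lemma DifferentiableAt.diagonal_apply [DecidableEq ι] {d : E → ι → ℝ}
    (hd : DifferentiableAt ℝ d x) (i j : ι) :
    DifferentiableAt ℝ (fun y => diagonal (d y) i j) x := by
  by_cases h : i = j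
  · simpa [h] using differentiableAt_pi.mp hd j
  · simp [h]

variable [Fintype ι]

lemma DifferentiableAt.dotProduct {u v : E → ι → ℝ} (hu : DifferentiableAt ℝ u x)
    (hv : DifferentiableAt ℝ v x) : DifferentiableAt ℝ (fun y => u y ⬝ᵥ v y) x :=
  DifferentiableAt.fun_sum fun i _ =>
    (differentiableAt_pi.mp hu i).mul (differentiableAt_pi.mp hv i)

lemma DifferentiableAt.mulVec {M : E → Matrix κ ι ℝ} {v : E → ι → ℝ}
    (hM : ∀ i j, DifferentiableAt ℝ (fun y => M y i j) x) (hv : DifferentiableAt ℝ v x) :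
    DifferentiableAt ℝ (fun y => M y *ᵥ v y) x :=
  differentiableAt_pi.mpr fun i =>
    DifferentiableAt.dotProduct (differentiableAt_pi.mpr (hM i)) hv

section Inverse

variable [DecidableEq ι]

attribute [local instance] Matrix.linftyOpNormedAddCommGroup Matrix.linftyOpNormedRing
  Matrix.linftyOpNormedAlgebra

lemma Matrix.differentiableAt_inv_apply {M : E → Matrix ι ι ℝ}
    (hM : ∀ i j, DifferentiableAt ℝ (fun y => M y i j) x) (hx : IsUnit (M x)) (i j : ι) :
    DifferentiableAt ℝ (fun y => (M y)⁻¹ i j) x := by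
  have hM' : DifferentiableAt ℝ M x := by
    have hsum : M = fun y => ∑ k, ∑ l, M y k l • single k l (1 : ℝ) :=
      funext fun y => (matrix_eq_sum_single (M y)).trans (by simp [smul_single])
    rw [hsum]
    exact DifferentiableAt.fun_sum fun k _ => DifferentiableAt.fun_sum fun l _ =>
      (hM k l).smul_const _
  have hentry := (entryLinearMap ℝ ℝ i j).toContinuousLinearMap.differentiableAt
    (x := Ring.inverse (M x))
  simp_rw [nonsing_inv_eq_ringInverse]
  exact hentry.comp x (hM'.inverse hx)

end Inverse

lemma Matrix.jacobian_mulVec_const {m : Type*} {F : E → ι → ℝ} (hF : DifferentiableAt ℝ F x)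
    (b : m → E) (c : ℝ) (j : m) :
    ((Matrix.of fun k p => fderiv ℝ F x (b k) p) *ᵥ fun _ => c) j
      = c * fderiv ℝ (fun y => ∑ p, F y p) x (b j) := by
  rw [fderiv_fun_sum fun p _ => differentiableAt_pi.mp hF p]
  simp [mulVec, dotProduct, fderiv_apply hF, Finset.mul_sum, mul_comm]

end Differentiability

section MarkovDecisionProcess

variable {S A : Type*} [DecidableEq S] {x : S × A → ℝ}
  {E : Type*} [NormedAddCommGroup E] [NormedSpace ℝ E] {π : E → S × A → ℝ} {θ : E}

lemma differentiableAt_piMat_apply (hπ : DifferentiableAt ℝ π θ) (s : S) (p : S × A) :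
    DifferentiableAt ℝ (fun t => piMat (π t) s p) θ := by
  by_cases h : p.1 = s
  · simpa [piMat, h] using differentiableAt_pi.mp hπ p
  · simp [piMat, h]

variable [Fintype S] {μ0 : S → ℝ}

lemma piMat_transpose_mulVec_apply (p : S × A) : ((piMat x)ᵀ *ᵥ μ0) p = x p * μ0 p.1 := by
  simp [piMat, mulVec, dotProduct, mul_comm]

lemma piMat_mulVec_one [Fintype A] (hx : IsPolicy x) : piMat x *ᵥ 1 = 1 := by
  ext s
  simp only [piMat, mulVec, dotProduct, of_apply, Pi.one_apply, mul_one, Fintype.sum_prod_type]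
  rw [Finset.sum_eq_single s (fun s' _ h => by simp [h]) (by simp)]
  simpa using hx.2 s

variable [DecidableEq A] {P : Matrix (S × A) S ℝ} {γ : ℝ}

lemma differentiableAt_psiMat_apply (hπ : DifferentiableAt ℝ π θ) (p p' : S × A) :
    DifferentiableAt ℝ (fun t => psiMat P γ (π t) p p') θ := by
  simp only [psiMat, Matrix.sub_apply, Matrix.smul_apply, mul_apply, smul_eq_mul]
  exact (differentiableAt_const _).sub <| (DifferentiableAt.fun_sum fun s _ =>
    (differentiableAt_piMat_apply hπ s p').const_mul _).const_mul γ

variable [Fintype A]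

lemma mul_piMat_mem_rowStochastic (hP : IsStochasticMat P) (hx : IsPolicy x) :
    P * piMat x ∈ rowStochastic ℝ (S × A) := by
  refine mem_rowStochastic.mpr ⟨fun p p' => ?_, ?_⟩
  · exact Finset.sum_nonneg fun s _ => mul_nonneg (hP.1 p s) (by
      by_cases h : p'.1 = s <;> simp [piMat, h, hx.1 p'])
  · have hP1 : P *ᵥ 1 = 1 := funext fun p => by simp [mulVec, dotProduct, hP.2 p]
    rw [← mulVec_mulVec, piMat_mulVec_one hx, hP1]

lemma isUnit_psiMat (hP : IsStochasticMat P) (hγ : |γ| < 1) (hx : IsPolicy x) :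
    IsUnit (psiMat P γ x) :=
  isUnit_one_sub_smul_of_mem_rowStochastic (mul_piMat_mem_rowStochastic hP hx) hγ

lemma psiMat_mulVec_one (hP : IsStochasticMat P) (hx : IsPolicy x) :
    psiMat P γ x *ᵥ 1 = (1 - γ) • 1 := by
  rw [psiMat, sub_mulVec, smul_mulVec, one_mulVec,
    one_vecMul_of_mem_rowStochastic (mul_piMat_mem_rowStochastic hP hx), sub_smul, one_smul]

lemma sum_psiMat_transpose_mulVec (hP : IsStochasticMat P) (hx : IsPolicy x)
    (u : S × A → ℝ) : ∑ p, ((psiMat P γ x)ᵀ *ᵥ u) p = (1 - γ) * ∑ p, u p := by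
  rw [← dotProduct_one, ← vecMul_transpose, transpose_transpose, ← dotProduct_mulVec,
    psiMat_mulVec_one hP hx, dotProduct_smul, dotProduct_one, smul_eq_mul]

lemma psiMat_transpose_mulVec_dOcc (hΨ : IsUnit (psiMat P γ x)) :
    (psiMat P γ x)ᵀ *ᵥ dOcc P γ μ0 x = (1 - γ) • ((piMat x)ᵀ *ᵥ μ0) := by
  rw [dOcc, mulVec_smul, mulVec_mulVec,
    mul_nonsing_inv _ ((isUnit_iff_isUnit_det _).mp ((isUnit_transpose _).mpr hΨ)), one_mulVec]

lemma dOcc_pos (hP : IsStochasticMat P) (hγ0 : 0 ≤ γ) (hγ1 : γ < 1) (hx : IsPolicy x)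
    (hμ0 : ∀ s, 0 < μ0 s) (hxpos : ∀ p, 0 < x p) (p : S × A) : 0 < dOcc P γ μ0 x p := by
  have hB := mul_piMat_mem_rowStochastic hP hx
  have hw : ∀ p', 0 < ((piMat x)ᵀ *ᵥ μ0) p' := fun p' => by
    rw [piMat_transpose_mulVec_apply]; exact mul_pos (hxpos p') (hμ0 p'.1)
  have hle : ((piMat x)ᵀ *ᵥ μ0) p ≤ (((psiMat P γ x)ᵀ)⁻¹ *ᵥ ((piMat x)ᵀ *ᵥ μ0)) p := by
    rw [← transpose_nonsing_inv]
    calc ((piMat x)ᵀ *ᵥ μ0) p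
        ≤ (psiMat P γ x)⁻¹ p p * ((piMat x)ᵀ *ᵥ μ0) p :=
          le_mul_of_one_le_left (hw p).le (one_le_inv_one_sub_smul_apply_self hB hγ0 hγ1 p)
      _ ≤ ∑ p', (psiMat P γ x)⁻¹ p' p * ((piMat x)ᵀ *ᵥ μ0) p' :=
          Finset.single_le_sum (f := fun p' => (psiMat P γ x)⁻¹ p' p * ((piMat x)ᵀ *ᵥ μ0) p')
            (fun p' _ => mul_nonneg (inv_one_sub_smul_apply_nonneg hB hγ0 hγ1 p' p) (hw p').le)
            (Finset.mem_univ p)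
  rw [dOcc, Pi.smul_apply, smul_eq_mul]
  exact mul_pos (by linarith) ((hw p).trans_le hle)

lemma isUnit_hessian (hΨ : IsUnit (psiMat P γ x)) (hd : ∀ p, 0 < dOcc P γ μ0 x p) :
    IsUnit ((psiMat P γ x)ᵀ * diagonal (dOcc P γ μ0 x) * psiMat P γ x) :=
  (((isUnit_transpose _).mpr hΨ).mul
    (isUnit_diagonal.mpr (Pi.isUnit_iff.mpr fun p => (hd p).ne'.isUnit))).mul hΨ

lemma inv_hessian_mulVec (hP : IsStochasticMat P) (hγ1 : γ ≠ 1) (hx : IsPolicy x)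
    (hΨ : IsUnit (psiMat P γ x))
    (hHes : IsUnit ((psiMat P γ x)ᵀ * diagonal (dOcc P γ μ0 x) * psiMat P γ x)) :
    ((psiMat P γ x)ᵀ * diagonal (dOcc P γ μ0 x) * psiMat P γ x)⁻¹
      *ᵥ ((1 - γ) • ((piMat x)ᵀ *ᵥ μ0)) = fun _ => (1 - γ)⁻¹ := by
  have := hHes.invertible
  refine inv_mulVec_eq_vec ?_
  have hΨc : psiMat P γ x *ᵥ (fun _ => (1 - γ)⁻¹) = 1 := by
    rw [show (fun _ => (1 - γ)⁻¹ : S × A → ℝ) = (1 - γ)⁻¹ • 1 from funext fun _ => by simp,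
      mulVec_smul, psiMat_mulVec_one hP hx, smul_smul, inv_mul_cancel₀ (sub_ne_zero.mpr hγ1.symm),
      one_smul]
  have hd1 : diagonal (dOcc P γ μ0 x) *ᵥ 1 = dOcc P γ μ0 x :=
    funext fun p => by rw [mulVec_diagonal, Pi.one_apply, mul_one]
  rw [← mulVec_mulVec, ← mulVec_mulVec, hΨc, hd1, psiMat_transpose_mulVec_dOcc hΨ]

lemma actor_add_dOcc_dotProduct_residual (hΨ : IsUnit (psiMat P γ x)) (r q : S × A → ℝ) :
    (1 - γ) * (μ0 ⬝ᵥ (piMat x *ᵥ q)) + dOcc P γ μ0 x ⬝ᵥ (r - psiMat P γ x *ᵥ q)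
      = dOcc P γ μ0 x ⬝ᵥ r := by
  have h : dOcc P γ μ0 x ⬝ᵥ (psiMat P γ x *ᵥ q) = (1 - γ) * (μ0 ⬝ᵥ (piMat x *ᵥ q)) := by
    rw [dotProduct_mulVec, ← mulVec_transpose, psiMat_transpose_mulVec_dOcc hΨ, smul_dotProduct,
      mulVec_transpose, ← dotProduct_mulVec, smul_eq_mul]
  rw [dotProduct_sub, h]
  ring

lemma sum_criticGradient (hP : IsStochasticMat P) (hx : IsPolicy x) (r q : S × A → ℝ) :
    ∑ p, ((psiMat P γ x)ᵀ *ᵥ (diagonal (dOcc P γ μ0 x) *ᵥ (psiMat P γ x *ᵥ q - r))) p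
      = -(1 - γ) * (dOcc P γ μ0 x ⬝ᵥ (r - psiMat P γ x *ᵥ q)) := by
  rw [sum_psiMat_transpose_mulVec hP hx]
  simp only [mulVec_diagonal, dotProduct, Pi.sub_apply, Finset.mul_sum]
  exact Finset.sum_congr rfl fun p _ => by ring

lemma differentiableAt_dOcc (hπ : DifferentiableAt ℝ π θ) (hΨ : IsUnit (psiMat P γ (π θ))) :
    DifferentiableAt ℝ (fun t => dOcc P γ μ0 (π t)) θ := by
  have hΨT := differentiableAt_inv_apply (M := fun t => (psiMat P γ (π t))ᵀ)
    (fun i j => differentiableAt_psiMat_apply hπ j i) ((isUnit_transpose _).mpr hΨ)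
  have hw := DifferentiableAt.mulVec (fun p s => differentiableAt_piMat_apply hπ s p)
    (differentiableAt_const μ0)
  exact (DifferentiableAt.mulVec hΨT hw).const_smul (1 - γ)

end MarkovDecisionProcess

variable {S A : Type*} [Fintype S] [Fintype A] [DecidableEq S] [DecidableEq A]
  [Nonempty S] [Nonempty A]

theorem stackelberg_gradient_is_policy_gradient_general
    (P : Matrix (S × A) S ℝ) (hP : IsStochasticMat P)
    (γ : ℝ) (hγ0 : 0 ≤ γ) (hγ1 : γ < 1)
    (r : S × A → ℝ) (μ0 : S → ℝ)
    {n : ℕ} (π : (Fin n → ℝ) → S × A → ℝ)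
    (hpol : ∀ θ, IsPolicy (π θ)) (hdiff : Differentiable ℝ π)
    (θ : Fin n → ℝ) (hμ0pos : ∀ s : S, 0 < μ0 s) (hπpos : ∀ p : S × A, 0 < π θ p)
    (q : S × A → ℝ) :
    IsUnit ((psiMat P γ (π θ))ᵀ * Matrix.diagonal (dOcc P γ μ0 (π θ)) * psiMat P γ (π θ)) ∧
    ∀ i : Fin n,
      (fderiv ℝ (fun t => (1 - γ) * (μ0 ⬝ᵥ (piMat (π t) *ᵥ q))) θ (Pi.single i 1)
        - ((Matrix.of fun j p' =>
              fderiv ℝ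
                (fun t => (psiMat P γ (π t))ᵀ *ᵥ
                  (Matrix.diagonal (dOcc P γ μ0 (π t)) *ᵥ (psiMat P γ (π t) *ᵥ q - r)))
                θ (Pi.single j 1) p')
            *ᵥ (((psiMat P γ (π θ))ᵀ * Matrix.diagonal (dOcc P γ μ0 (π θ)) * psiMat P γ (π θ))⁻¹
              *ᵥ ((1 - γ) • ((piMat (π θ))ᵀ *ᵥ μ0)))) i
        = fderiv ℝ (fun t => (1 - γ) * (μ0 ⬝ᵥ (piMat (π t) *ᵥ q))) θ (Pi.single i 1)
          + fderiv ℝ (fun t => dOcc P γ μ0 (π t) ⬝ᵥ (r - psiMat P γ (π t) *ᵥ q)) θ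
              (Pi.single i 1)) ∧
      (fderiv ℝ (fun t => (1 - γ) * (μ0 ⬝ᵥ (piMat (π t) *ᵥ q))) θ (Pi.single i 1)
        - ((Matrix.of fun j p' =>
              fderiv ℝ
                (fun t => (psiMat P γ (π t))ᵀ *ᵥ
                  (Matrix.diagonal (dOcc P γ μ0 (π t)) *ᵥ (psiMat P γ (π t) *ᵥ q - r)))
                θ (Pi.single j 1) p')
            *ᵥ (((psiMat P γ (π θ))ᵀ * Matrix.diagonal (dOcc P γ μ0 (π θ)) * psiMat P γ (π θ))⁻¹
              *ᵥ ((1 - γ) • ((piMat (π θ))ᵀ *ᵥ μ0)))) i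
        = fderiv ℝ (fun t => dOcc P γ μ0 (π t) ⬝ᵥ r) θ (Pi.single i 1)) := by
  have hγ : |γ| < 1 := abs_lt.mpr ⟨by linarith, hγ1⟩
  have hΨ : ∀ t, IsUnit (psiMat P γ (π t)) := fun t => isUnit_psiMat hP hγ (hpol t)
  have hHes := isUnit_hessian (hΨ θ) (dOcc_pos hP hγ0 hγ1 (hpol θ) hμ0pos hπpos)
  have hd := differentiableAt_dOcc (μ0 := μ0) (hdiff θ) (hΨ θ)
  have hΨq := DifferentiableAt.mulVec (differentiableAt_psiMat_apply (P := P) (γ := γ) (hdiff θ))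
    (differentiableAt_const q)
  have hactor : DifferentiableAt ℝ (fun t => (1 - γ) * (μ0 ⬝ᵥ (piMat (π t) *ᵥ q))) θ :=
    ((differentiableAt_const μ0).dotProduct (DifferentiableAt.mulVec
      (differentiableAt_piMat_apply (hdiff θ)) (differentiableAt_const q))).const_mul _
  have hresidual : DifferentiableAt ℝ
      (fun t => dOcc P γ μ0 (π t) ⬝ᵥ (r - psiMat P γ (π t) *ᵥ q)) θ :=
    hd.dotProduct ((differentiableAt_const r).sub hΨq)
  have hcritic : DifferentiableAt ℝ (fun t => (psiMat P γ (π t))ᵀ *ᵥ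
      (diagonal (dOcc P γ μ0 (π t)) *ᵥ (psiMat P γ (π t) *ᵥ q - r))) θ :=
    DifferentiableAt.mulVec (fun i j => differentiableAt_psiMat_apply (hdiff θ) j i)
      (DifferentiableAt.mulVec hd.diagonal_apply (hΨq.sub (differentiableAt_const r)))
  refine ⟨hHes, fun i => ?_⟩
  rw [inv_hessian_mulVec hP hγ1.ne (hpol θ) (hΨ θ) hHes, jacobian_mulVec_const hcritic,
    funext fun t => sum_criticGradient hP (hpol t) r q, fderiv_const_mul hresidual,
    ← funext fun t => actor_add_dOcc_dotProduct_residual (hΨ t) r q,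
    fderiv_fun_add hactor hresidual]
  have h1γ : 1 - γ ≠ 0 := sub_ne_zero.mpr hγ1.ne'
  simp only [_root_.smul_apply, _root_.add_apply, smul_eq_mul]
  constructor <;> field_simp <;> ring

/-- Stackelberg gradient equals the policy gradient: with full-support `μ0` and
`π_θ`, the Stackelberg gradient `g = ∂_θ J_π - M ⬝ Hes⁻¹ ⬝ v` (with `Hes = Ψ_θᵀ Δ(d_θ) Ψ_θ`
invertible, `v = (1-γ)Π_θᵀμ0`, and `M` the Jacobian in `θ` of `θ ↦ Ψ_θᵀ Δ(d_θ)(Ψ_θ q - r)`)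
equals `∂_θ J_π + ∇_θ(d_θᵀ(r - Ψ_θ q))`, which is the true policy gradient `∇_θ J`. -/
theorem stackelberg_gradient_is_policy_gradient
    (P : Matrix (S × A) S ℝ) (hP : IsStochasticMat P)
    (γ : ℝ) (hγ0 : 0 ≤ γ) (hγ1 : γ < 1)
    (r : S × A → ℝ) (μ0 : S → ℝ) (hμ0 : IsProbVec μ0)
    {n : ℕ} (π : (Fin n → ℝ) → S × A → ℝ)
    (hpol : ∀ θ, IsPolicy (π θ)) (hdiff : Differentiable ℝ π)
    (θ : Fin n → ℝ) (hμ0pos : ∀ s : S, 0 < μ0 s) (hπpos : ∀ p : S × A, 0 < π θ p)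
    (q : S × A → ℝ) :
    IsUnit ((psiMat P γ (π θ))ᵀ * Matrix.diagonal (dOcc P γ μ0 (π θ)) * psiMat P γ (π θ)) ∧
    ∀ i : Fin n,
      (fderiv ℝ (fun t => (1 - γ) * (μ0 ⬝ᵥ (piMat (π t) *ᵥ q))) θ (Pi.single i 1)
        - ((Matrix.of fun j p' =>
              fderiv ℝ
                (fun t => (psiMat P γ (π t))ᵀ *ᵥ
                  (Matrix.diagonal (dOcc P γ μ0 (π t)) *ᵥ (psiMat P γ (π t) *ᵥ q - r)))
                θ (Pi.single j 1) p')
            *ᵥ (((psiMat P γ (π θ))ᵀ * Matrix.diagonal (dOcc P γ μ0 (π θ)) * psiMat P γ (π θ))⁻¹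
              *ᵥ ((1 - γ) • ((piMat (π θ))ᵀ *ᵥ μ0)))) i
        = fderiv ℝ (fun t => (1 - γ) * (μ0 ⬝ᵥ (piMat (π t) *ᵥ q))) θ (Pi.single i 1)
          + fderiv ℝ (fun t => dOcc P γ μ0 (π t) ⬝ᵥ (r - psiMat P γ (π t) *ᵥ q)) θ
              (Pi.single i 1)) ∧
      (fderiv ℝ (fun t => (1 - γ) * (μ0 ⬝ᵥ (piMat (π t) *ᵥ q))) θ (Pi.single i 1)
        - ((Matrix.of fun j p' =>
              fderiv ℝ
                (fun t => (psiMat P γ (π t))ᵀ *ᵥ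
                  (Matrix.diagonal (dOcc P γ μ0 (π t)) *ᵥ (psiMat P γ (π t) *ᵥ q - r)))
                θ (Pi.single j 1) p')
            *ᵥ (((psiMat P γ (π θ))ᵀ * Matrix.diagonal (dOcc P γ μ0 (π θ)) * psiMat P γ (π θ))⁻¹
              *ᵥ ((1 - γ) • ((piMat (π θ))ᵀ *ᵥ μ0)))) i
        = fderiv ℝ (fun t => dOcc P γ μ0 (π t) ⬝ᵥ r) θ (Pi.single i 1)) :=
  stackelberg_gradient_is_policy_gradient_general P hP γ hγ0 hγ1 r μ0 π hpol hdiff θ hμ0pos hπpos q
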